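/- arXiv:2011.04903 — 2 statements merged into one kernel-verified Lean document; each statement's English description precedes it below -/
import Mathlib

section
/- Let d = d1*d2 with 2 ≤ d1 ≤ d2. Suppose S = {ψ_1,...,ψ_N} ⊆ C^d can be partitioned into k ≤ d1 disjoint subsets S_1, ..., S_k such that any two vectors from different subsets are orthogonal, and each S_i spans a subspace of dimension at most d2. Then there exists a unitary U ∈ U(d) such that U|ψ⟩ is a product vector in C^{d1} ⊗ C^{d2} for every ψ ∈ S. In particular, S is not an absolutely entangled set. -/
/-!
The spans `V i` of the classes `S_i` are pairwise orthogonal and have dimension at most `d2`, so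
an orthonormal basis of each `V i` can be placed in the row `{i} × Fin d2` of the index set
`Fin d1 × Fin d2` (there are `k ≤ d1` rows), and the union of these bases, being orthonormal,
extends to an orthonormal basis `b` of the whole space. The unitary `b.repr` then sends every
vector of `S_i` to a vector supported on row `i`, i.e. to `e_i ⊗ v` for some `v`.
-/

noncomputable section

def ProdVec (d1 d2 : ℕ) (ψ : EuclideanSpace ℂ (Fin d1 × Fin d2)) : Prop :=
  ∃ (u : Fin d1 → ℂ) (v : Fin d2 → ℂ), ∀ p : Fin d1 × Fin d2, ψ p = u p.1 * v p.2

open Module Submodule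
open scoped Function

section

variable {𝕜 E ι : Type*} [RCLike 𝕜] [NormedAddCommGroup E] [InnerProductSpace 𝕜 E]

theorem Orthonormal.exists_orthonormalBasis_extension_of_embedding [FiniteDimensional 𝕜 E]
    [Fintype ι] {α : Type*} (card_ι : finrank 𝕜 E = Fintype.card ι) {w : α → E}
    (hw : Orthonormal 𝕜 w) (ρ : α ↪ ι) :
    ∃ b : OrthonormalBasis ι 𝕜 E, ∀ a, b (ρ a) = w a := by
  have hrestrict : (Set.range ρ).domRestrict (Function.extend ρ w 0) =
      w ∘ (Equiv.ofInjective ρ ρ.injective).symm := by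
    ext1 ⟨_, a, rfl⟩
    simp [ρ.injective.extend_apply, Equiv.ofInjective_symm_apply]
  obtain ⟨b, hb⟩ := Orthonormal.exists_orthonormalBasis_extension_of_card_eq card_ι
    (hrestrict ▸ hw.comp _ (Equiv.injective _))
  exact ⟨b, fun a => (hb (ρ a) ⟨a, rfl⟩).trans (ρ.injective.extend_apply w 0 a)⟩

theorem OrthonormalBasis.repr_apply_eq_zero_of_mem_span_image [Fintype ι]
    (b : OrthonormalBasis ι 𝕜 E) {s : Set ι} {x : E} (hx : x ∈ span 𝕜 (b '' s)) {i : ι}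
    (hi : i ∉ s) : b.repr x i = 0 := by
  rw [← b.coe_toBasis, Basis.mem_span_image] at hx
  rw [← b.coe_toBasis_repr_apply, ← Finsupp.notMem_support_iff]
  exact fun h => hi (hx h)

theorem exists_orthonormalBasis_prod_span_image_fst [FiniteDimensional 𝕜 E]
    {κ σ τ : Type*} [Fintype σ] [Fintype τ] (card_στ : finrank 𝕜 E = Fintype.card (σ × τ))
    (V : κ → Submodule 𝕜 E) (hV : Pairwise ((· ⟂ ·) on V)) (r : κ ↪ σ)
    (hdim : ∀ a, finrank 𝕜 (V a) ≤ Fintype.card τ) :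
    ∃ b : OrthonormalBasis (σ × τ) 𝕜 E, ∀ a, V a ≤ span 𝕜 (b '' {p | p.1 = r a}) := by
  let bV a := stdOrthonormalBasis 𝕜 (V a)
  have e a : Fin (finrank 𝕜 (V a)) ↪ τ :=
    (Function.Embedding.nonempty_of_card_le (by simpa using hdim a)).some
  let ρ : (Σ a, Fin (finrank 𝕜 (V a))) ↪ σ × τ :=
    ⟨fun x => (r x.1, e x.1 x.2), by
      rintro ⟨a, t⟩ ⟨a', t'⟩ h
      obtain ⟨ha, ht⟩ := Prod.ext_iff.mp h
      obtain rfl := r.injective ha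
      obtain rfl := (e a).injective ht
      rfl⟩
  have hw : Orthonormal 𝕜 fun x : Σ a, Fin (finrank 𝕜 (V a)) => (bV x.1 x.2 : E) :=
    (OrthogonalFamily.of_pairwise hV).orthonormal_sigma_orthonormal fun a => (bV a).orthonormal
  obtain ⟨b, hb⟩ := hw.exists_orthonormalBasis_extension_of_embedding card_στ ρ
  refine ⟨b, fun a x hx => ?_⟩
  have hx_sum : (⟨x, hx⟩ : V a) = ∑ t, (bV a).repr ⟨x, hx⟩ t • bV a t := ((bV a).sum_repr _).symm
  rw [← Submodule.coe_mk x hx, hx_sum, Submodule.coe_sum]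
  exact sum_mem fun t _ => smul_mem _ _ (subset_span ⟨ρ ⟨a, t⟩, rfl, hb _⟩)

theorem pairwise_isOrtho_span_image_fiber {α κ : Type*} (ψ : α → E) (f : α → κ)
    (horth : ∀ j j', f j ≠ f j' → inner 𝕜 (ψ j) (ψ j') = 0) :
    Pairwise ((· ⟂ ·) on fun i => span 𝕜 (ψ '' {j | f j = i})) := by
  intro i i' hii'
  rw [Function.onFun, isOrtho_span]
  rintro _ ⟨j, rfl, rfl⟩ _ ⟨j', rfl, rfl⟩
  exact horth j j' hii'

end

theorem prodVec_of_apply_eq_zero_of_fst_ne {d1 d2 : ℕ} {φ : EuclideanSpace ℂ (Fin d1 × Fin d2)}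
    (a : Fin d1) (h : ∀ p : Fin d1 × Fin d2, p.1 ≠ a → φ p = 0) : ProdVec d1 d2 φ :=
  ⟨Pi.single a 1, fun t => φ (a, t), fun p => by
    by_cases hp : p.1 = a
    · simp [← hp]
    · simp [hp, h p hp]⟩

theorem stmt2_general (d1 d2 N k : ℕ) (hk : k ≤ d1)
    (ψ : Fin N → EuclideanSpace ℂ (Fin d1 × Fin d2))
    -- `f` assigns each state to one of the `k` disjoint subsets `S_i = f ⁻¹ {i}`
    (f : Fin N → Fin k)
    (horth : ∀ j j' : Fin N, f j ≠ f j' →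
      inner ℂ (ψ j) (ψ j') = (0 : ℂ))
    (hdim : ∀ i : Fin k,
      Module.finrank ℂ (Submodule.span ℂ (ψ '' {j : Fin N | f j = i})) ≤ d2) :
    ∃ U : EuclideanSpace ℂ (Fin d1 × Fin d2) ≃ₗᵢ[ℂ] EuclideanSpace ℂ (Fin d1 × Fin d2),
      ∀ j : Fin N, ProdVec d1 d2 (U (ψ j)) := by
  obtain ⟨b, hb⟩ := exists_orthonormalBasis_prod_span_image_fst (τ := Fin d2) (by simp) _
    (pairwise_isOrtho_span_image_fiber ψ f horth) (Fin.castLEEmb hk) (by simpa using hdim)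
  refine ⟨b.repr, fun j => prodVec_of_apply_eq_zero_of_fst_ne (Fin.castLE hk (f j)) fun p hp => ?_⟩
  exact b.repr_apply_eq_zero_of_mem_span_image (hb (f j) (subset_span ⟨j, rfl, rfl⟩)) hp

theorem stmt2 (d1 d2 N k : ℕ) (hd1 : 2 ≤ d1) (hd12 : d1 ≤ d2) (hk : k ≤ d1)
    (ψ : Fin N → EuclideanSpace ℂ (Fin d1 × Fin d2))
    -- `f` assigns each state to one of the `k` disjoint subsets `S_i = f ⁻¹ {i}`
    (f : Fin N → Fin k)
    (horth : ∀ j j' : Fin N, f j ≠ f j' →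
      inner ℂ (ψ j) (ψ j') = (0 : ℂ))
    (hdim : ∀ i : Fin k,
      Module.finrank ℂ (Submodule.span ℂ (ψ '' {j : Fin N | f j = i})) ≤ d2) :
    ∃ U : EuclideanSpace ℂ (Fin d1 × Fin d2) ≃ₗᵢ[ℂ] EuclideanSpace ℂ (Fin d1 × Fin d2),
      ∀ j : Fin N, ProdVec d1 d2 (U (ψ j)) :=
  stmt2_general d1 d2 N k hk ψ f horth hdim
end
end

section
/- Let H_A = C^2 and H_B = C^n. Every orthonormal product basis of H_A ⊗ H_B can be written as S = {a_k ⊗ u^{(k)}_i : 1 ≤ i ≤ n_k} ∪ {a_k^⊥ ⊗ v^{(k)}_i : 1 ≤ i ≤ n_k}, 1 ≤ k ≤ t, where for each k the pair {a_k, a_k^⊥} is an orthonormal basis of H_A, the families {u^{(k)}_i}_{i=1}^{n_k} and {v^{(k)}_i}_{i=1}^{n_k} are each orthonormal in H_B, span{u^{(k)}_i} = span{v^{(k)}_i} with common dimension n_k, and H_B is the orthogonal direct sum of the subspaces span{u^{(k)}_i} over k = 1,...,t. -/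
/-!
Write each basis vector as `x_m ⊗ y_m`. Two basis vectors whose `ℂ²`-factors are not orthogonal
must have orthogonal `ℂⁿ`-factors. In `ℂ²` the lines `ℂ x_m` fall into classes of the form
`{L, Lᗮ}`; fixing an orthonormal frame `(a_k, a_kᗮ)` adapted to each class puts every basis vector
in the form `a_k ⊗ u` or `a_kᗮ ⊗ v`. Then all the `u`'s (over all classes) are pairwise orthogonal,
and so are all the `v`'s; as there are `2n` basis vectors, each family is an orthonormal basis of
`ℂⁿ`. Expanding a `v` of class `k` in the `u`-basis, only the `u`'s of class `k` contribute, so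
within each class the `u`'s and the `v`'s span the same subspace.
-/

noncomputable section

open Module Submodule Set
open scoped InnerProductSpace

section Tensor

variable {𝕜 : Type*} [RCLike 𝕜] {ι κ : Type*}

def tensorVec (x : EuclideanSpace 𝕜 ι) (y : EuclideanSpace 𝕜 κ) : EuclideanSpace 𝕜 (ι × κ) :=
  WithLp.toLp 2 fun p => x p.1 * y p.2

@[simp]
theorem tensorVec_apply (x : EuclideanSpace 𝕜 ι) (y : EuclideanSpace 𝕜 κ) (p : ι × κ) :
    tensorVec x y p = x p.1 * y p.2 := rfl

theorem inner_tensorVec [Fintype ι] [Fintype κ] (x x' : EuclideanSpace 𝕜 ι)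
    (y y' : EuclideanSpace 𝕜 κ) :
    ⟪tensorVec x y, tensorVec x' y'⟫_𝕜 = ⟪x, x'⟫_𝕜 * ⟪y, y'⟫_𝕜 := by
  simp only [PiLp.inner_apply, RCLike.inner_apply, tensorVec_apply, Fintype.sum_prod_type,
    Finset.sum_mul_sum, map_mul]
  exact Finset.sum_congr rfl fun i _ => Finset.sum_congr rfl fun j _ => by ring

theorem smul_tensorVec (c : 𝕜) (x : EuclideanSpace 𝕜 ι) (y : EuclideanSpace 𝕜 κ) :
    tensorVec (c • x) y = tensorVec x (c • y) := by
  ext p; simp only [tensorVec_apply, PiLp.smul_apply, smul_eq_mul]; ring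

@[simp]
theorem zero_tensorVec (y : EuclideanSpace 𝕜 κ) : tensorVec (0 : EuclideanSpace 𝕜 ι) y = 0 := by
  ext p; simp

theorem ProdVec.exists_eq_tensorVec {d₁ d₂ : ℕ} {ψ : EuclideanSpace ℂ (Fin d₁ × Fin d₂)}
    (h : ProdVec d₁ d₂ ψ) : ∃ x y, ψ = tensorVec x y := by
  obtain ⟨x, y, hxy⟩ := h
  exact ⟨WithLp.toLp 2 x, WithLp.toLp 2 y, by ext p; exact hxy p⟩

end Tensor

section Geometry

variable {𝕜 E : Type*} [RCLike 𝕜] [NormedAddCommGroup E] [InnerProductSpace 𝕜 E]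

def orthoPair (K : Submodule 𝕜 E) : Set (Submodule 𝕜 E) := {K, Kᗮ}

theorem orthoPair_orthogonal [FiniteDimensional 𝕜 E] (K : Submodule 𝕜 E) :
    orthoPair Kᗮ = orthoPair K := by
  rw [orthoPair, orthoPair, orthogonal_orthogonal, pair_comm]

theorem span_singleton_eq_orthogonal_of_inner_eq_zero (h2 : finrank 𝕜 E = 2) {v w : E}
    (hv : v ≠ 0) (hw : w ≠ 0) (h : ⟪v, w⟫_𝕜 = 0) : 𝕜 ∙ w = (𝕜 ∙ v)ᗮ :=
  have : Fact (finrank 𝕜 E = 1 + 1) := ⟨h2⟩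
  (eq_span_singleton_of_mem_of_finrank_eq_one (finrank_orthogonal_span_singleton hv)
    (mem_orthogonal_singleton_iff_inner_right.mpr h) hw).symm

theorem exists_orthonormalBasis_span_eq (h2 : finrank 𝕜 E = 2) {v : E} (hv : v ≠ 0) :
    ∃ b : OrthonormalBasis (Fin 2) 𝕜 E, 𝕜 ∙ v = 𝕜 ∙ b 0 ∧ (𝕜 ∙ v)ᗮ = 𝕜 ∙ b 1 := by
  have : FiniteDimensional 𝕜 E := .of_finrank_pos (by omega)
  have hnorm : ‖v‖ ≠ 0 := norm_ne_zero_iff.mpr hv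
  set u : E := (‖v‖⁻¹ : 𝕜) • v
  have hu : Orthonormal 𝕜 (({0} : Set (Fin 2)).domRestrict fun _ => u) := by
    refine ⟨fun _ => ?_, fun i j hij => absurd (Subsingleton.elim i j) hij⟩
    show ‖u‖ = 1
    simp [u, norm_smul, hnorm]
  obtain ⟨b, hb⟩ := hu.exists_orthonormalBasis_extension_of_card_eq (by simp [h2])
  have hvb : 𝕜 ∙ v = 𝕜 ∙ b 0 := by
    rw [hb 0 rfl, span_singleton_smul_eq (by simpa using hnorm)]
  refine ⟨b, hvb, ?_⟩
  rw [hvb, span_singleton_eq_orthogonal_of_inner_eq_zero h2 (b.orthonormal.ne_zero 0)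
    (b.orthonormal.ne_zero 1) (b.orthonormal.inner_eq_zero (by decide))]

theorem Orthonormal.mem_span_image_of_inner_eq_zero {ι : Type*}
    [Fintype ι] {f : ι → E} (hf : Orthonormal 𝕜 f) (htop : span 𝕜 (range f) = ⊤) {s : Set ι}
    {x : E} (hx : ∀ i ∉ s, ⟪f i, x⟫_𝕜 = 0) : x ∈ span 𝕜 (f '' s) := by
  classical
  let b := OrthonormalBasis.mk hf htop.ge
  rw [← b.sum_repr' x]
  refine sum_mem fun i _ => ?_
  by_cases hi : i ∈ s
  · exact smul_mem _ _ (subset_span ⟨i, hi, by simp [b]⟩)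
  · simp [b, hx i hi]

end Geometry

theorem exists_fin_classes {ι β : Type*} [Finite ι] (P : ι → β) :
    ∃ (t : ℕ) (cls : ι → Fin t) (rep : Fin t → ι),
      (∀ m, P (rep (cls m)) = P m) ∧ ∀ m m', cls m = cls m' ↔ P m = P m' := by
  obtain ⟨t, ⟨e⟩⟩ := Finite.exists_equiv_fin (range P)
  refine ⟨t, fun m => e ⟨P m, m, rfl⟩, fun k => (e.symm k).2.choose, fun m => ?_, fun m m' => ?_⟩
  · simp only [Equiv.symm_apply_apply]
    exact Exists.choose_spec (p := fun i => P i = P m) _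
  · rw [e.injective.eq_iff, Subtype.ext_iff]

theorem exists_equiv_sigma_sum {ι τ : Type*} (cls : ι → τ) (side : ι → Fin 2) (nk : τ → ℕ)
    (es : ∀ k i, Fin (nk k) ≃ {m | cls m = k ∧ side m = i}) :
    ∃ e : (Σ k, Fin (nk k) ⊕ Fin (nk k)) ≃ ι,
      ∀ k j, e ⟨k, .inl j⟩ = es k 0 j ∧ e ⟨k, .inr j⟩ = es k 1 j := by
  let split : ∀ k, {m | cls m = k ∧ side m = 0} ⊕ {m | cls m = k ∧ side m = 1} ≃
      {m // cls m = k} := fun k =>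
    (Equiv.sumCongr (Equiv.subtypeSubtypeEquivSubtypeInter _ _).symm
      ((Equiv.subtypeSubtypeEquivSubtypeInter _ _).symm.trans
        (Equiv.subtypeEquivRight fun m => by omega))).trans
    (Equiv.sumCompl fun m : {m // cls m = k} => side m = 0)
  exact ⟨(Equiv.sigmaCongrRight fun k => (Equiv.sumCongr (es k 0) (es k 1)).trans (split k)).trans
    (Equiv.sigmaFiberEquiv cls), fun k j => ⟨rfl, rfl⟩⟩

section Decomposition

variable {𝕜 : Type*} [RCLike 𝕜] {ι κ : Type*}

/-- `frame k` is the orthonormal pair `(a_k, a_k^⊥)` of the class `k`, and `side m` selects which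
of the two is the `ℂ²`-factor of `B m`. -/
structure FrameDecomposition (B : ι → EuclideanSpace 𝕜 (Fin 2 × κ)) where
  t : ℕ
  cls : ι → Fin t
  side : ι → Fin 2
  frame : Fin t → Fin 2 → EuclideanSpace 𝕜 (Fin 2)
  w : ι → EuclideanSpace 𝕜 κ
  orthonormal_frame : ∀ k, Orthonormal 𝕜 (frame k)
  apply_eq : ∀ m, B m = tensorVec (frame (cls m) (side m)) (w m)
  inner_frame_ne_zero : ∀ m m', cls m ≠ cls m' →
    ⟪frame (cls m) (side m), frame (cls m') (side m')⟫_𝕜 ≠ 0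

theorem nonempty_frameDecomposition [Finite ι] {B : ι → EuclideanSpace 𝕜 (Fin 2 × κ)}
    (hB0 : ∀ m, B m ≠ 0) (hfac : ∀ m, ∃ x y, B m = tensorVec x y) :
    Nonempty (FrameDecomposition B) := by
  have h2 : finrank 𝕜 (EuclideanSpace 𝕜 (Fin 2)) = 2 := finrank_euclideanSpace_fin
  choose x y hxy using hfac
  have hx0 : ∀ m, x m ≠ 0 := fun m hx => hB0 m (by rw [hxy, hx, zero_tensorVec])
  obtain ⟨t, cls, rep, hrep, hcls⟩ := exists_fin_classes fun m => orthoPair (𝕜 ∙ x m)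
  choose b hb0 hb1 using fun k => exists_orthonormalBasis_span_eq h2 (hx0 (rep k))
  have hside : ∀ m, ∃ i, 𝕜 ∙ x m = 𝕜 ∙ b (cls m) i := by
    intro m
    have hmem : 𝕜 ∙ x m ∈ orthoPair (𝕜 ∙ x (rep (cls m))) := hrep m ▸ mem_insert _ _
    rcases hmem with h | h
    · exact ⟨0, h.trans (hb0 _)⟩
    · exact ⟨1, h.trans (hb1 _)⟩
  choose side hside using hside
  have hw : ∀ m, ∃ w, B m = tensorVec (b (cls m) (side m)) w := by
    intro m
    obtain ⟨c, hc⟩ := mem_span_singleton.mp (hside m ▸ mem_span_singleton_self (x m))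
    exact ⟨c • y m, by rw [hxy, ← hc, smul_tensorVec]⟩
  choose w hw using hw
  refine ⟨⟨t, cls, side, fun k => b k, w, fun k => (b k).orthonormal, hw, fun m m' hne h => ?_⟩⟩
  refine hne ((hcls m m').mpr ?_)
  -- orthogonal lines lie in the same pair
  rw [hside m, hside m', span_singleton_eq_orthogonal_of_inner_eq_zero h2
    ((b _).orthonormal.ne_zero _) ((b _).orthonormal.ne_zero _) h, orthoPair_orthogonal]

namespace FrameDecomposition

variable {B : ι → EuclideanSpace 𝕜 (Fin 2 × κ)} (D : FrameDecomposition B)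

def frameVec (m : ι) : EuclideanSpace 𝕜 (Fin 2) := D.frame (D.cls m) (D.side m)

abbrev fiber (k : Fin D.t) (i : Fin 2) : Set ι := {m | D.cls m = k ∧ D.side m = i}

def classSpan (k : Fin D.t) (i : Fin 2) : Submodule 𝕜 (EuclideanSpace 𝕜 κ) :=
  span 𝕜 (D.w '' D.fiber k i)

theorem span_range_w_comp_eq_classSpan {k : Fin D.t} {i : Fin 2} {N : ℕ}
    (e : Fin N ≃ D.fiber k i) :
    span 𝕜 (range fun j => D.w (e j)) = D.classSpan k i := by
  rw [classSpan, image_eq_range, ← e.surjective.range_comp]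
  rfl

theorem apply_eq_of_mem_fiber {m : ι} {k : Fin D.t} {i : Fin 2} (h : m ∈ D.fiber k i) :
    B m = tensorVec (D.frame k i) (D.w m) := by
  obtain ⟨rfl, rfl⟩ := h
  exact D.apply_eq m

theorem inner_frameVec_self (m : ι) : ⟪D.frameVec m, D.frameVec m⟫_𝕜 = 1 := by
  rw [inner_self_eq_norm_sq_to_K, frameVec, (D.orthonormal_frame _).norm_eq_one]
  simp

theorem inner_frameVec_ne_zero {m m' : ι} (h : D.cls m ≠ D.cls m' ∨ D.side m = D.side m') :
    ⟪D.frameVec m, D.frameVec m'⟫_𝕜 ≠ 0 := by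
  by_cases hc : D.cls m = D.cls m'
  · have hx : D.frameVec m = D.frameVec m' := by
      rw [frameVec, frameVec, hc, h.resolve_left (not_not_intro hc)]
    rw [hx, inner_frameVec_self]
    exact one_ne_zero
  · exact D.inner_frame_ne_zero m m' hc

variable [Fintype κ]

theorem inner_apply (m m' : ι) :
    ⟪B m, B m'⟫_𝕜 = ⟪D.frameVec m, D.frameVec m'⟫_𝕜 * ⟪D.w m, D.w m'⟫_𝕜 := by
  rw [D.apply_eq, D.apply_eq, inner_tensorVec, frameVec, frameVec]

variable {D} (hB : Orthonormal 𝕜 B)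
include hB

theorem inner_w_self (m : ι) : ⟪D.w m, D.w m⟫_𝕜 = 1 := by
  have h := D.inner_apply m m
  rw [inner_self_eq_norm_sq_to_K, hB.norm_eq_one, D.inner_frameVec_self, one_mul] at h
  simpa using h.symm

theorem inner_w_eq_zero {m m' : ι} (hne : m ≠ m')
    (hx : ⟪D.frameVec m, D.frameVec m'⟫_𝕜 ≠ 0) : ⟪D.w m, D.w m'⟫_𝕜 = 0 := by
  have h := D.inner_apply m m'
  rw [hB.inner_eq_zero hne, eq_comm] at h
  exact (mul_eq_zero.mp h).resolve_left hx

theorem inner_w_eq_zero_of_cls_ne {m m' : ι} (h : D.cls m ≠ D.cls m') :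
    ⟪D.w m, D.w m'⟫_𝕜 = 0 :=
  inner_w_eq_zero hB (fun hm => h (congrArg D.cls hm)) (D.inner_frameVec_ne_zero (.inl h))

theorem orthonormal_w_of_side_eq {s : Set ι} (hs : ∀ m ∈ s, ∀ m' ∈ s, D.side m = D.side m') :
    Orthonormal 𝕜 fun m : s => D.w m := by
  classical
  rw [orthonormal_iff_ite]
  rintro ⟨m, hm⟩ ⟨m', hm'⟩
  split_ifs with h
  · obtain rfl : m = m' := congrArg Subtype.val h
    exact inner_w_self hB m
  · exact inner_w_eq_zero hB (fun hmm => h (Subtype.ext hmm))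
      (D.inner_frameVec_ne_zero (.inr (hs m hm m' hm')))

theorem orthonormal_w_side (i : Fin 2) : Orthonormal 𝕜 fun m : {m // D.side m = i} => D.w m :=
  orthonormal_w_of_side_eq hB (s := {m | D.side m = i}) fun _ hm _ hm' => hm.trans hm'.symm

theorem orthonormal_w_fiber (k : Fin D.t) (i : Fin 2) :
    Orthonormal 𝕜 fun m : D.fiber k i => D.w m :=
  orthonormal_w_of_side_eq hB fun _ hm _ hm' => hm.2.trans hm'.2.symm

variable [Fintype ι]

theorem finrank_classSpan (k : Fin D.t) (i : Fin 2) :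
    finrank 𝕜 (D.classSpan k i) = Fintype.card (D.fiber k i) := by
  rw [classSpan, image_eq_range,
    finrank_span_eq_card (orthonormal_w_fiber hB k i).linearIndependent]

variable (hcard : Fintype.card ι = 2 * Fintype.card κ)
include hcard

theorem card_side (i : Fin 2) : Fintype.card {m // D.side m = i} = Fintype.card κ := by
  have hle : ∀ i, Fintype.card {m // D.side m = i} ≤ Fintype.card κ := fun i => by
    simpa using (orthonormal_w_side hB i).linearIndependent.fintype_card_le_finrank
  have hsum : Fintype.card ι = ∑ i, Fintype.card {m // D.side m = i} := by
    rw [← Fintype.card_sigma, Fintype.card_congr (Equiv.sigmaFiberEquiv D.side)]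
  rw [Fin.sum_univ_two] at hsum
  have := hle 0
  have := hle 1
  fin_cases i <;> simp <;> omega

theorem span_w_side_eq_top (i : Fin 2) :
    span 𝕜 (range fun m : {m // D.side m = i} => D.w m) = ⊤ :=
  eq_top_of_finrank_eq <| by
    rw [finrank_span_eq_card (orthonormal_w_side hB i).linearIndependent, card_side hB hcard,
      finrank_euclideanSpace]

theorem classSpan_le (k : Fin D.t) (i j : Fin 2) : D.classSpan k i ≤ D.classSpan k j := by
  refine span_le.mpr ?_
  rintro _ ⟨m, ⟨hk, -⟩, rfl⟩
  -- in the orthonormal basis of side-`j` vectors, `w m` only meets vectors of its own class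
  have h := (orthonormal_w_side hB j).mem_span_image_of_inner_eq_zero
    (span_w_side_eq_top hB hcard j) (s := {m' | D.cls m'.1 = k}) (x := D.w m)
    fun m' hm' => inner_w_eq_zero_of_cls_ne hB (hk ▸ hm')
  have himage : (fun m' : {m // D.side m = j} => D.w m') '' {m' | D.cls m'.1 = k} =
      D.w '' D.fiber k j := by
    ext v
    simp [fiber, and_assoc]
  rwa [himage] at h

theorem classSpan_eq (k : Fin D.t) (i j : Fin 2) : D.classSpan k i = D.classSpan k j :=
  le_antisymm (classSpan_le hB hcard k i j) (classSpan_le hB hcard k j i)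

theorem iSup_classSpan_eq_top (i : Fin 2) : ⨆ k, D.classSpan k i = ⊤ := by
  refine top_unique ?_
  rw [← span_w_side_eq_top hB hcard i, span_le]
  rintro _ ⟨⟨m, hm⟩, rfl⟩
  exact le_iSup (D.classSpan · i) (D.cls m) (subset_span ⟨m, ⟨rfl, hm⟩, rfl⟩)

end FrameDecomposition

end Decomposition

theorem stmt8_general (n : ℕ)
    (B : Fin (2 * n) → EuclideanSpace ℂ (Fin 2 × Fin n))
    (hON : Orthonormal ℂ B)
    (hprod : ∀ m, ProdVec 2 n (B m)) :
    ∃ (t : ℕ) (nk : Fin t → ℕ)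
      (a ap : Fin t → EuclideanSpace ℂ (Fin 2))
      (u v : (k : Fin t) → Fin (nk k) → EuclideanSpace ℂ (Fin n))
      (e : ((k : Fin t) × (Fin (nk k) ⊕ Fin (nk k))) ≃ Fin (2 * n)),
      (∀ k, Orthonormal ℂ ![a k, ap k]) ∧
      (∀ k, Orthonormal ℂ (u k)) ∧
      (∀ k, Orthonormal ℂ (v k)) ∧
      (∀ k, Submodule.span ℂ (Set.range (u k)) = Submodule.span ℂ (Set.range (v k))) ∧
      (∀ k, Module.finrank ℂ (Submodule.span ℂ (Set.range (u k))) = nk k) ∧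
      -- H_B is the orthogonal direct sum of the subspaces span{u^{(k)}_i}
      (∀ k k', k ≠ k' → ∀ i i', inner ℂ (u k i) (u k' i') = (0 : ℂ)) ∧
      (⨆ k, Submodule.span ℂ (Set.range (u k))) = ⊤ ∧
      (∀ k i, ∀ p : Fin 2 × Fin n, B (e ⟨k, Sum.inl i⟩) p = a k p.1 * u k i p.2) ∧
      (∀ k i, ∀ p : Fin 2 × Fin n, B (e ⟨k, Sum.inr i⟩) p = ap k p.1 * v k i p.2) := by
  obtain ⟨D⟩ := nonempty_frameDecomposition hON.ne_zero fun m => (hprod m).exists_eq_tensorVec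
  have hcard : Fintype.card (Fin (2 * n)) = 2 * Fintype.card (Fin n) := by simp
  let nk k := Fintype.card (D.fiber k 0)
  let es k i : Fin (nk k) ≃ D.fiber k i :=
    (Fintype.equivFinOfCardEq (by rw [← D.finrank_classSpan hON, D.classSpan_eq hON hcard k i 0,
      D.finrank_classSpan hON])).symm
  obtain ⟨e, he⟩ := exists_equiv_sigma_sum D.cls D.side nk es
  refine ⟨D.t, nk, (D.frame · 0), (D.frame · 1), fun k j => D.w (es k 0 j),
    fun k j => D.w (es k 1 j), e, fun k => ?_, fun k => ?_, fun k => ?_, fun k => ?_, fun k => ?_,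
    fun k k' hkk' j j' => ?_, ?_, fun k j p => ?_, fun k j p => ?_⟩
  · convert D.orthonormal_frame k
    ext i
    fin_cases i <;> rfl
  · exact (D.orthonormal_w_fiber hON k 0).comp _ (es k 0).injective
  · exact (D.orthonormal_w_fiber hON k 1).comp _ (es k 1).injective
  · rw [D.span_range_w_comp_eq_classSpan, D.span_range_w_comp_eq_classSpan,
      D.classSpan_eq hON hcard]
  · rw [D.span_range_w_comp_eq_classSpan, D.finrank_classSpan hON]
  · exact D.inner_w_eq_zero_of_cls_ne hON (by rwa [(es k 0 j).2.1, (es k' 0 j').2.1])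
  · simp_rw [D.span_range_w_comp_eq_classSpan]
    exact D.iSup_classSpan_eq_top hON hcard 0
  · rw [(he k j).1, D.apply_eq_of_mem_fiber (es k 0 j).2]
    rfl
  · rw [(he k j).2, D.apply_eq_of_mem_fiber (es k 1 j).2]
    rfl

/-- Feng's structure theorem for orthonormal product bases of `C^2 ⊗ C^n`. -/
theorem stmt8 (n : ℕ) (hn : 1 ≤ n)
    (B : Fin (2 * n) → EuclideanSpace ℂ (Fin 2 × Fin n))
    (hON : Orthonormal ℂ B)
    (hprod : ∀ m, ProdVec 2 n (B m)) :
    ∃ (t : ℕ) (nk : Fin t → ℕ)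
      (a ap : Fin t → EuclideanSpace ℂ (Fin 2))
      (u v : (k : Fin t) → Fin (nk k) → EuclideanSpace ℂ (Fin n))
      (e : ((k : Fin t) × (Fin (nk k) ⊕ Fin (nk k))) ≃ Fin (2 * n)),
      (∀ k, Orthonormal ℂ ![a k, ap k]) ∧
      (∀ k, Orthonormal ℂ (u k)) ∧
      (∀ k, Orthonormal ℂ (v k)) ∧
      (∀ k, Submodule.span ℂ (Set.range (u k)) = Submodule.span ℂ (Set.range (v k))) ∧
      (∀ k, Module.finrank ℂ (Submodule.span ℂ (Set.range (u k))) = nk k) ∧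
      -- H_B is the orthogonal direct sum of the subspaces span{u^{(k)}_i}
      (∀ k k', k ≠ k' → ∀ i i', inner ℂ (u k i) (u k' i') = (0 : ℂ)) ∧
      (⨆ k, Submodule.span ℂ (Set.range (u k))) = ⊤ ∧
      (∀ k i, ∀ p : Fin 2 × Fin n, B (e ⟨k, Sum.inl i⟩) p = a k p.1 * u k i p.2) ∧
      (∀ k i, ∀ p : Fin 2 × Fin n, B (e ⟨k, Sum.inr i⟩) p = ap k p.1 * v k i p.2) :=
  stmt8_general n B hON hprod
end
end
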